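/- arXiv:1304.1989 — 2 statements merged into one kernel-verified Lean document; each statement's English description precedes it below -/
import Mathlib

section
/- (Pointwise estimates for differences of nonlinearities, Lemma 3.1.) Let N1, N2 satisfy assumption (A1). Then there exists a constant c* > 0 (depending only on the coefficients) such that for all u, v, u', v' ∈ ℂ, writing U = u − u', V = v − v' and r2 = |U|²·(|v|² + |v'|²) + (|u|² + |u'|²)·|V|², one has: |N1(u,v) − N1(u',v')|·|U| ≤ (c*/4)·r2, |N2(u,v) − N2(u',v')|·|V| ≤ (c*/4)·r2, |2·Re(i·m·V·conj(U) − i·(N1(u,v) − N1(u',v'))·conj(U))| ≤ m·(|U|² + |V|²) + c*·r2, |2·Re(i·m·U·conj(V) − i·(N2(u,v) − N2(u',v'))·conj(V))| ≤ m·(|U|² + |V|²) + c*·r2, and |Re(2i·(N1(u,v) − N1(u',v'))·conj(U) + 2i·(N2(u,v) − N2(u',v'))·conj(V))| ≤ c*·r2. -/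
open MeasureTheory

noncomputable section

/-- Assumption (A1): the nonlinearities have the cubic product form with complex
coefficients `α₁,…,α₅, β₁,…,β₅`. -/
def SatisfiesA1 (N1 N2 : ℂ → ℂ → ℂ) : Prop :=
  ∃ a1 a2 a3 a4 a5 b1 b2 b3 b4 b5 : ℂ,
    (∀ u v : ℂ, N1 u v =
      (a1 * u + a2 * (starRingEnd ℂ) u) *
        (a3 * (Complex.normSq v : ℂ) + a4 * v ^ 2 + a5 * ((starRingEnd ℂ) v) ^ 2)) ∧
    (∀ u v : ℂ, N2 u v =
      (b1 * v + b2 * (starRingEnd ℂ) v) *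
        (b3 * (Complex.normSq u : ℂ) + b4 * u ^ 2 + b5 * ((starRingEnd ℂ) u) ^ 2))

/-- Assumption (A2): `Re (i conj u N1(u,v) + i conj v N2(u,v)) = 0` for all `u, v ∈ ℂ`. -/
def SatisfiesA2 (N1 N2 : ℂ → ℂ → ℂ) : Prop :=
  ∀ u v : ℂ,
    (Complex.I * (starRingEnd ℂ) u * N1 u v + Complex.I * (starRingEnd ℂ) v * N2 u v).re = 0

/-- `(u,v)` is a classical (C¹) solution of the nonlinear Dirac system
`i(∂ₜu + ∂ₓu) = -m v + N1(u,v)`, `i(∂ₜv - ∂ₓv) = -m u + N2(u,v)` on `[0,T) × ℝ`.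
Time derivatives are one-sided (within `[0,∞)`). -/
def IsDiracSolution (m T : ℝ) (N1 N2 : ℂ → ℂ → ℂ) (u v : ℝ → ℝ → ℂ) : Prop :=
  ContDiffOn ℝ 1 (fun p : ℝ × ℝ => u p.1 p.2) (Set.Ico 0 T ×ˢ (Set.univ : Set ℝ)) ∧
  ContDiffOn ℝ 1 (fun p : ℝ × ℝ => v p.1 p.2) (Set.Ico 0 T ×ˢ (Set.univ : Set ℝ)) ∧
  (∀ t ∈ Set.Ico 0 T, ∀ x : ℝ,
    Complex.I * (derivWithin (fun s => u s x) (Set.Ici 0) t + deriv (fun y => u t y) x) =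
      -(m : ℂ) * v t x + N1 (u t x) (v t x)) ∧
  (∀ t ∈ Set.Ico 0 T, ∀ x : ℝ,
    Complex.I * (derivWithin (fun s => v s x) (Set.Ici 0) t - deriv (fun y => v t y) x) =
      -(m : ℂ) * u t x + N2 (u t x) (v t x))

/-- `(u,v)` is a global classical (C¹) solution of the nonlinear Dirac system on `[0,∞) × ℝ`. -/
def IsGlobalDiracSolution (m : ℝ) (N1 N2 : ℂ → ℂ → ℂ) (u v : ℝ → ℝ → ℂ) : Prop :=
  ContDiffOn ℝ 1 (fun p : ℝ × ℝ => u p.1 p.2) (Set.Ici 0 ×ˢ (Set.univ : Set ℝ)) ∧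
  ContDiffOn ℝ 1 (fun p : ℝ × ℝ => v p.1 p.2) (Set.Ici 0 ×ˢ (Set.univ : Set ℝ)) ∧
  (∀ t ∈ Set.Ici (0 : ℝ), ∀ x : ℝ,
    Complex.I * (derivWithin (fun s => u s x) (Set.Ici 0) t + deriv (fun y => u t y) x) =
      -(m : ℂ) * v t x + N1 (u t x) (v t x)) ∧
  (∀ t ∈ Set.Ici (0 : ℝ), ∀ x : ℝ,
    Complex.I * (derivWithin (fun s => v s x) (Set.Ici 0) t - deriv (fun y => v t y) x) =
      -(m : ℂ) * u t x + N2 (u t x) (v t x))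

/-- The charge `L₀(t) = ∫ (|u(t,x)|² + |v(t,x)|²) dx`. -/
noncomputable def L0fun (u v : ℝ → ℝ → ℂ) (t : ℝ) : ℝ :=
  ∫ x : ℝ, (Complex.normSq (u t x) + Complex.normSq (v t x))

/-- `D₀(t) = ∫ |u(t,x)|² |v(t,x)|² dx`. -/
noncomputable def D0fun (u v : ℝ → ℝ → ℂ) (t : ℝ) : ℝ :=
  ∫ x : ℝ, Complex.normSq (u t x) * Complex.normSq (v t x)

/-- The Bony functional `Q₀(t) = ∬_{x<y} |u(t,x)|² |v(t,y)|² dx dy`. -/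
noncomputable def Q0fun (u v : ℝ → ℝ → ℂ) (t : ℝ) : ℝ :=
  ∫ p in {p : ℝ × ℝ | p.1 < p.2}, Complex.normSq (u t p.1) * Complex.normSq (v t p.2)

/-- Pointwise quantity `r₂ = |U|²(|v|²+|v'|²) + (|u|²+|u'|²)|V|²` for `U = u - u'`, `V = v - v'`. -/
noncomputable def r2p (a b a' b' : ℂ) : ℝ :=
  Complex.normSq (a - a') * (Complex.normSq b + Complex.normSq b') +
    (Complex.normSq a + Complex.normSq a') * Complex.normSq (b - b')

/-- `r₂(t,x,y)` for two solutions. -/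
noncomputable def r2fun (u v u' v' : ℝ → ℝ → ℂ) (t x y : ℝ) : ℝ :=
  Complex.normSq (u t x - u' t x) * (Complex.normSq (v t y) + Complex.normSq (v' t y)) +
    (Complex.normSq (u t x) + Complex.normSq (u' t x)) * Complex.normSq (v t y - v' t y)

/-- `L₁(t) = ∫ (|U(t,x)|² + |V(t,x)|²) dx`. -/
noncomputable def L1fun (u v u' v' : ℝ → ℝ → ℂ) (t : ℝ) : ℝ :=
  ∫ x : ℝ, (Complex.normSq (u t x - u' t x) + Complex.normSq (v t x - v' t x))

/-- `Q₁(t) = ∬_{x<y} r₂(t,x,y) dx dy`. -/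
noncomputable def Q1fun (u v u' v' : ℝ → ℝ → ℂ) (t : ℝ) : ℝ :=
  ∫ p in {p : ℝ × ℝ | p.1 < p.2}, r2fun u v u' v' t p.1 p.2

/-- `D₁(t) = ∫ r₂(t,x,x) dx`. -/
noncomputable def D1fun (u v u' v' : ℝ → ℝ → ℂ) (t : ℝ) : ℝ :=
  ∫ x : ℝ, r2fun u v u' v' t x x

/-- `h₃(t) = 2m L₀(0) t + 2m L₀'(0) t + ∫₀ᵗ (c D₀(τ) + c D₀'(τ)) dτ`. -/
noncomputable def h3fun (m c : ℝ) (u v u' v' : ℝ → ℝ → ℂ) (t : ℝ) : ℝ :=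
  2 * m * L0fun u v 0 * t + 2 * m * L0fun u' v' 0 * t +
    ∫ τ in (0 : ℝ)..t, (c * D0fun u v τ + c * D0fun u' v' τ)

/-- The `L²` distance `‖f - g‖_{L²}` of two functions `ℝ → ℂ`. -/
noncomputable def l2dist (f g : ℝ → ℂ) : ℝ :=
  Real.sqrt (∫ x : ℝ, Complex.normSq (f x - g x))

/-!
Under (A1), `N1(u,v) = A(u) B(v)` with `A` real-linear and `B` a real quadratic form, so
`N1(u,v) - N1(u',v') = A(U) B(v) + A(u') (B(v) - B(v'))` has size
`≲ |U||v|² + |u'|(|v| + |v'|)|V|`. Multiplying by `|U|` and applying AM-GM to the cross term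
gives `≲ r₂`; `N2` is the same with the roles of `u` and `v` swapped. The three estimates on
real parts then follow from `|Re z| ≤ |z|` and `2|U||V| ≤ |U|² + |V|²`.
-/

open ComplexConjugate

namespace PointwiseDifference

def conjLinear (a1 a2 u : ℂ) : ℂ := a1 * u + a2 * conj u

def conjQuadratic (a3 a4 a5 v : ℂ) : ℂ :=
  a3 * (Complex.normSq v : ℂ) + a4 * v ^ 2 + a5 * conj v ^ 2

variable (a1 a2 a3 a4 a5 : ℂ)

lemma conjLinear_sub (u u' : ℂ) :
    conjLinear a1 a2 u - conjLinear a1 a2 u' = conjLinear a1 a2 (u - u') := by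
  simp only [conjLinear, map_sub]
  ring

lemma norm_conjLinear_le (u : ℂ) : ‖conjLinear a1 a2 u‖ ≤ (‖a1‖ + ‖a2‖) * ‖u‖ :=
  calc ‖conjLinear a1 a2 u‖ ≤ ‖a1 * u‖ + ‖a2 * conj u‖ := norm_add_le _ _
    _ = (‖a1‖ + ‖a2‖) * ‖u‖ := by rw [norm_mul, norm_mul, Complex.norm_conj]; ring

lemma norm_conjQuadratic_le (v : ℂ) :
    ‖conjQuadratic a3 a4 a5 v‖ ≤ (‖a3‖ + ‖a4‖ + ‖a5‖) * ‖v‖ ^ 2 :=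
  calc ‖conjQuadratic a3 a4 a5 v‖
      ≤ ‖a3 * (Complex.normSq v : ℂ)‖ + ‖a4 * v ^ 2‖ + ‖a5 * conj v ^ 2‖ :=
        norm_add₃_le
    _ = (‖a3‖ + ‖a4‖ + ‖a5‖) * ‖v‖ ^ 2 := by
        rw [← Complex.mul_conj, ← map_pow]
        simp only [norm_mul, norm_pow, Complex.norm_conj]
        ring

-- Each of the monomials `|v|², v², conj v²` satisfies the bound separately.
lemma norm_conjQuadratic_sub_le (v v' : ℂ) :
    ‖conjQuadratic a3 a4 a5 v - conjQuadratic a3 a4 a5 v'‖ ≤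
      (‖a3‖ + ‖a4‖ + ‖a5‖) * ((‖v‖ + ‖v'‖) * ‖v - v'‖) := by
  have h_normSq : ‖(Complex.normSq v : ℂ) - Complex.normSq v'‖ ≤ (‖v‖ + ‖v'‖) * ‖v - v'‖ :=
    calc ‖(Complex.normSq v : ℂ) - Complex.normSq v'‖
        = ‖v * conj (v - v') + conj v' * (v - v')‖ := by
          rw [← Complex.mul_conj, ← Complex.mul_conj, map_sub]; ring_nf
      _ ≤ (‖v‖ + ‖v'‖) * ‖v - v'‖ := by
          refine (norm_add_le _ _).trans_eq ?_
          simp only [norm_mul, Complex.norm_conj]; ring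
  have h_sq : ‖v ^ 2 - v' ^ 2‖ ≤ (‖v‖ + ‖v'‖) * ‖v - v'‖ := by
    rw [show v ^ 2 - v' ^ 2 = (v + v') * (v - v') by ring, norm_mul]
    exact mul_le_mul_of_nonneg_right (norm_add_le _ _) (norm_nonneg _)
  have h_conj_sq : ‖conj v ^ 2 - conj v' ^ 2‖ ≤ (‖v‖ + ‖v'‖) * ‖v - v'‖ := by
    rwa [← map_pow, ← map_pow, ← map_sub, Complex.norm_conj]
  have h_split : conjQuadratic a3 a4 a5 v - conjQuadratic a3 a4 a5 v' =
      a3 * ((Complex.normSq v : ℂ) - Complex.normSq v') + a4 * (v ^ 2 - v' ^ 2) +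
        a5 * (conj v ^ 2 - conj v' ^ 2) := by
    simp only [conjQuadratic]; ring
  rw [h_split]
  refine norm_add₃_le.trans ?_
  simp only [norm_mul]
  linarith [mul_le_mul_of_nonneg_left h_normSq (norm_nonneg a3),
    mul_le_mul_of_nonneg_left h_sq (norm_nonneg a4),
    mul_le_mul_of_nonneg_left h_conj_sq (norm_nonneg a5)]

lemma r2p_eq (u v u' v' : ℂ) :
    r2p u v u' v' =
      ‖u - u'‖ ^ 2 * (‖v‖ ^ 2 + ‖v'‖ ^ 2) + (‖u‖ ^ 2 + ‖u'‖ ^ 2) * ‖v - v'‖ ^ 2 := by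
  simp only [r2p, Complex.sq_norm]

lemma r2p_comm (u v u' v' : ℂ) : r2p v u v' u' = r2p u v u' v' := by
  simp only [r2p]; ring

lemma r2p_nonneg (u v u' v' : ℂ) : 0 ≤ r2p u v u' v' := by
  rw [r2p_eq]; positivity

-- Product rule `AB - A'B' = (A - A')B + A'(B - B')`, then AM-GM on the cross term
-- `‖u - u'‖ (‖v‖ + ‖v'‖) · ‖u'‖ ‖v - v'‖`.
lemma norm_mul_sub_mul_mul_norm_sub_le {A A' B B' : ℂ} {K L : ℝ} (hK : 0 ≤ K) (hL : 0 ≤ L)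
    {u v u' v' : ℂ} (hA : ‖A - A'‖ ≤ K * ‖u - u'‖) (hA' : ‖A'‖ ≤ K * ‖u'‖)
    (hB : ‖B‖ ≤ L * ‖v‖ ^ 2) (hB' : ‖B - B'‖ ≤ L * ((‖v‖ + ‖v'‖) * ‖v - v'‖)) :
    ‖A * B - A' * B'‖ * ‖u - u'‖ ≤ 2 * (K * L) * r2p u v u' v' := by
  have h_norm : ‖A * B - A' * B'‖ ≤
      K * L * (‖u - u'‖ * ‖v‖ ^ 2 + ‖u'‖ * ((‖v‖ + ‖v'‖) * ‖v - v'‖)) :=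
    calc ‖A * B - A' * B'‖ = ‖(A - A') * B + A' * (B - B')‖ := by ring_nf
      _ ≤ ‖A - A'‖ * ‖B‖ + ‖A'‖ * ‖B - B'‖ := (norm_add_le _ _).trans_eq (by simp only [norm_mul])
      _ ≤ K * ‖u - u'‖ * (L * ‖v‖ ^ 2) + K * ‖u'‖ * (L * ((‖v‖ + ‖v'‖) * ‖v - v'‖)) := by
          gcongr
      _ = _ := by ring
  have h_amgm : (‖u - u'‖ * ‖v‖ ^ 2 + ‖u'‖ * ((‖v‖ + ‖v'‖) * ‖v - v'‖)) * ‖u - u'‖ ≤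
      2 * r2p u v u' v' := by
    rw [r2p_eq]
    nlinarith [sq_nonneg (‖u - u'‖ * (‖v‖ + ‖v'‖) - ‖u'‖ * ‖v - v'‖),
      sq_nonneg (‖u - u'‖ * (‖v‖ - ‖v'‖)), sq_nonneg (‖u - u'‖ * ‖v'‖),
      sq_nonneg (‖u‖ * ‖v - v'‖)]
  calc ‖A * B - A' * B'‖ * ‖u - u'‖
      ≤ K * L * (‖u - u'‖ * ‖v‖ ^ 2 + ‖u'‖ * ((‖v‖ + ‖v'‖) * ‖v - v'‖)) * ‖u - u'‖ := by
        gcongr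
    _ ≤ K * L * (2 * r2p u v u' v') := by
        rw [mul_assoc]; gcongr
    _ = 2 * (K * L) * r2p u v u' v' := by ring

lemma norm_sub_mul_norm_sub_le {N : ℂ → ℂ → ℂ}
    (hN : ∀ u v, N u v = conjLinear a1 a2 u * conjQuadratic a3 a4 a5 v) (u v u' v' : ℂ) :
    ‖N u v - N u' v'‖ * ‖u - u'‖ ≤
      2 * ((‖a1‖ + ‖a2‖) * (‖a3‖ + ‖a4‖ + ‖a5‖)) * r2p u v u' v' := by
  rw [hN, hN]
  refine norm_mul_sub_mul_mul_norm_sub_le (by positivity) (by positivity) ?_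
    (norm_conjLinear_le a1 a2 u') (norm_conjQuadratic_le a3 a4 a5 v)
    (norm_conjQuadratic_sub_le a3 a4 a5 v v')
  rw [conjLinear_sub]
  exact norm_conjLinear_le a1 a2 _

lemma abs_two_re_mass_sub_le {m : ℝ} (hm : 0 ≤ m) (U V D : ℂ) :
    |2 * (Complex.I * (m : ℂ) * V * conj U - Complex.I * D * conj U).re| ≤
      m * (Complex.normSq U + Complex.normSq V) + 2 * (‖D‖ * ‖U‖) := by
  have h_norm : ‖Complex.I * (m : ℂ) * V * conj U - Complex.I * D * conj U‖ ≤
      m * (‖U‖ * ‖V‖) + ‖D‖ * ‖U‖ :=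
    (norm_sub_le _ _).trans_eq <| by
      simp only [norm_mul, Complex.norm_I, Complex.norm_conj, Complex.norm_of_nonneg hm]; ring
  have h_amgm : 2 * (‖U‖ * ‖V‖) ≤ Complex.normSq U + Complex.normSq V := by
    rw [← Complex.sq_norm, ← Complex.sq_norm, ← mul_assoc]
    exact two_mul_le_add_sq _ _
  calc |2 * (Complex.I * (m : ℂ) * V * conj U - Complex.I * D * conj U).re|
      ≤ 2 * (m * (‖U‖ * ‖V‖) + ‖D‖ * ‖U‖) := by
        rw [abs_mul, abs_two]
        gcongr
        exact (Complex.abs_re_le_norm _).trans h_norm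
    _ ≤ m * (Complex.normSq U + Complex.normSq V) + 2 * (‖D‖ * ‖U‖) := by
        nlinarith [mul_le_mul_of_nonneg_left h_amgm hm]

lemma abs_re_two_I_mul_add_le (D U E V : ℂ) :
    |(2 * Complex.I * D * conj U + 2 * Complex.I * E * conj V).re| ≤
      2 * (‖D‖ * ‖U‖) + 2 * (‖E‖ * ‖V‖) :=
  (Complex.abs_re_le_norm _).trans <| (norm_add_le _ _).trans_eq <| by
    simp only [norm_mul, Complex.norm_I, Complex.norm_conj, Complex.norm_two]; ring

end PointwiseDifference

open PointwiseDifference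

/-- Pointwise estimates for differences of the nonlinearities (Lemma 3.1): if `N1, N2`
satisfy (A1) with coefficients `a1,…,a5, b1,…,b5`, there is `c* > 0` (depending only on
the coefficients) such that for all `u, v, u', v' ∈ ℂ`, with `U = u - u'`, `V = v - v'`
and `r₂ = |U|²(|v|² + |v'|²) + (|u|² + |u'|²)|V|²`:
`|N1(u,v) - N1(u',v')||U| ≤ (c*/4) r₂`, `|N2(u,v) - N2(u',v')||V| ≤ (c*/4) r₂`,
`|2 Re(i m V conj U - i (N1(u,v) - N1(u',v')) conj U)| ≤ m(|U|² + |V|²) + c* r₂`,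
`|2 Re(i m U conj V - i (N2(u,v) - N2(u',v')) conj V)| ≤ m(|U|² + |V|²) + c* r₂`, and
`|Re(2i (N1(u,v) - N1(u',v')) conj U + 2i (N2(u,v) - N2(u',v')) conj V)| ≤ c* r₂`. -/
theorem pointwise_difference_estimates (m : ℝ) (hm : 0 ≤ m)
    (a1 a2 a3 a4 a5 b1 b2 b3 b4 b5 : ℂ) (N1 N2 : ℂ → ℂ → ℂ)
    (hN1 : ∀ u v : ℂ, N1 u v =
      (a1 * u + a2 * (starRingEnd ℂ) u) *
        (a3 * (Complex.normSq v : ℂ) + a4 * v ^ 2 + a5 * ((starRingEnd ℂ) v) ^ 2))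
    (hN2 : ∀ u v : ℂ, N2 u v =
      (b1 * v + b2 * (starRingEnd ℂ) v) *
        (b3 * (Complex.normSq u : ℂ) + b4 * u ^ 2 + b5 * ((starRingEnd ℂ) u) ^ 2)) :
    ∃ cs > 0, ∀ u v u' v' : ℂ,
      ‖N1 u v - N1 u' v'‖ * ‖u - u'‖ ≤ cs / 4 * r2p u v u' v' ∧
      ‖N2 u v - N2 u' v'‖ * ‖v - v'‖ ≤ cs / 4 * r2p u v u' v' ∧
      |2 * (Complex.I * (m : ℂ) * (v - v') * (starRingEnd ℂ) (u - u') -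
          Complex.I * (N1 u v - N1 u' v') * (starRingEnd ℂ) (u - u')).re| ≤
        m * (Complex.normSq (u - u') + Complex.normSq (v - v')) + cs * r2p u v u' v' ∧
      |2 * (Complex.I * (m : ℂ) * (u - u') * (starRingEnd ℂ) (v - v') -
          Complex.I * (N2 u v - N2 u' v') * (starRingEnd ℂ) (v - v')).re| ≤
        m * (Complex.normSq (u - u') + Complex.normSq (v - v')) + cs * r2p u v u' v' ∧
      |(2 * Complex.I * (N1 u v - N1 u' v') * (starRingEnd ℂ) (u - u') +
          2 * Complex.I * (N2 u v - N2 u' v') * (starRingEnd ℂ) (v - v')).re| ≤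
        cs * r2p u v u' v' := by
  set K1 := (‖a1‖ + ‖a2‖) * (‖a3‖ + ‖a4‖ + ‖a5‖)
  set K2 := (‖b1‖ + ‖b2‖) * (‖b3‖ + ‖b4‖ + ‖b5‖)
  refine ⟨8 * (K1 + K2 + 1), by positivity, fun u v u' v' => ?_⟩
  set cs := 8 * (K1 + K2 + 1)
  have hr := r2p_nonneg u v u' v'
  have hcs_r : 0 ≤ cs * r2p u v u' v' := mul_nonneg (by positivity) hr
  have h1 : ‖N1 u v - N1 u' v'‖ * ‖u - u'‖ ≤ cs / 4 * r2p u v u' v' :=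
    (norm_sub_mul_norm_sub_le a1 a2 a3 a4 a5 hN1 u v u' v').trans <| by
      gcongr; linarith [show 0 ≤ K2 by positivity]
  have h2 : ‖N2 u v - N2 u' v'‖ * ‖v - v'‖ ≤ cs / 4 * r2p u v u' v' := by
    have h := norm_sub_mul_norm_sub_le b1 b2 b3 b4 b5 (N := fun v u => N2 u v) (fun v u => hN2 u v)
      v u v' u'
    rw [r2p_comm] at h
    refine h.trans ?_
    gcongr; linarith [show 0 ≤ K1 by positivity]
  refine ⟨h1, h2, ?_, ?_, ?_⟩
  · linarith [abs_two_re_mass_sub_le hm (u - u') (v - v') (N1 u v - N1 u' v')]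
  · linarith [add_comm (Complex.normSq (u - u')) (Complex.normSq (v - v')),
      abs_two_re_mass_sub_le hm (v - v') (u - u') (N2 u v - N2 u' v')]
  · linarith [abs_re_two_I_mul_add_le (N1 u v - N1 u' v') (u - u') (N2 u v - N2 u' v') (v - v')]
end
end

section
/- (Cauchy property of the solution sequence, Theorem 1.2, convergence part.) Let N1, N2 satisfy (A1) and (A2) and let δ > 0 be the smallness constant of the L² stability estimate. Suppose (u_{0k}, v_{0k}), k ∈ ℕ, are smooth compactly supported initial data with ‖u_{0k}‖²_{L²} + ‖v_{0k}‖²_{L²} < δ for all k, such that (u_{0k}, v_{0k}) is a Cauchy sequence in L²(ℝ;ℂ²). Let (u_k, v_k) be the corresponding global classical solutions of the nonlinear Dirac system. Then for every T ≥ 0 the sequence (u_k, v_k) is Cauchy in C([0,T]; L²(ℝ;ℂ²)); i.e., sup_{0 ≤ t ≤ T} (‖u_k(t,·) − u_j(t,·)‖_{L²} + ‖v_k(t,·) − v_j(t,·)‖_{L²}) → 0 as k, j → ∞, and hence there is (u_∞, v_∞) ∈ C([0,∞); L²(ℝ;ℂ²)) with ‖u_k − u_∞‖_{C([0,T];L²)}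 + ‖v_k − v_∞‖_{C([0,T];L²)} → 0 for every T ≥ 0. -/
open MeasureTheory

noncomputable section

/-!
By the stability estimate, on `[0, T]` the `L²` distance of two solutions is at most a constant
times the distance of their data, so the solutions are uniformly Cauchy on `[0, T]` in `L²`, and
completeness of `L²` yields a limit, uniform on every `[0, T]`. The limit is continuous in time
because every solution is. Indeed, by (A2) the density `ρ = |u|² + |v|²` satisfies the continuity
equation `∂ₜρ + ∂ₓ(|u|² - |v|²) = 0` with flux bounded by `ρ`, so testing it against wide cutoffs
shows that the charge `∫ ρ` is conserved; conservation of the norm together with weak continuity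
(the data at a fixed time have compact support) gives continuity in `L²`. The bound on the charge
that the cutoff argument needs comes from comparing with the zero solution, a solution by (A1).
-/

open Set Filter Topology

lemma ContinuousOn.continuous_slice {E : Type*} [TopologicalSpace E] {u : ℝ → ℝ → E}
    (hu : ContinuousOn (fun p : ℝ × ℝ ↦ u p.1 p.2) (Ici 0 ×ˢ univ)) {s : ℝ} (hs : 0 ≤ s) :
    Continuous (u s) :=
  hu.comp_continuous (continuous_const.prodMk continuous_id) fun _ ↦ ⟨hs, trivial⟩

lemma ContinuousOn.continuous_comp_max_zero {E : Type*} [TopologicalSpace E] {u : ℝ → ℝ → E}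
    (hu : ContinuousOn (fun p : ℝ × ℝ ↦ u p.1 p.2) (Ici 0 ×ˢ univ)) :
    Continuous (fun p : ℝ × ℝ ↦ u (max p.1 0) p.2) :=
  hu.comp_continuous ((continuous_fst.max continuous_const).prodMk continuous_snd)
    fun p ↦ ⟨le_max_right p.1 0, trivial⟩

section Slices

variable {E : Type*} [NormedAddCommGroup E] [NormedSpace ℝ E] {U : ℝ → ℝ → E}

lemma ContDiffOn.hasDerivWithinAt_timeSlice
    (hU : ContDiffOn ℝ 1 (fun p : ℝ × ℝ ↦ U p.1 p.2) (Ici 0 ×ˢ univ)) {t : ℝ} (ht : 0 ≤ t)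
    (x : ℝ) : HasDerivWithinAt (U · x) (derivWithin (U · x) (Ici 0) t) (Ici 0) t := by
  have hι : DifferentiableWithinAt ℝ (fun s : ℝ ↦ (s, x)) (Ici 0) t :=
    differentiableWithinAt_id.prodMk (differentiableWithinAt_const x)
  exact ((hU.differentiableOn one_ne_zero (t, x) ⟨ht, trivial⟩).comp t hι
    fun _ hs ↦ mk_mem_prod hs (mem_univ x)).hasDerivWithinAt

lemma ContDiffOn.hasDerivAt_spaceSlice
    (hU : ContDiffOn ℝ 1 (fun p : ℝ × ℝ ↦ U p.1 p.2) (Ici 0 ×ˢ univ)) {t : ℝ} (ht : 0 ≤ t)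
    (x : ℝ) : HasDerivAt (U t)
      (fderivWithin ℝ (fun p : ℝ × ℝ ↦ U p.1 p.2) (Ici 0 ×ˢ univ) (t, x) (0, 1)) x := by
  have hF := ((hU.differentiableOn one_ne_zero) (t, x) ⟨ht, trivial⟩).hasFDerivWithinAt
  have hι : HasDerivWithinAt (fun y : ℝ ↦ (t, y)) ((0 : ℝ), (1 : ℝ)) univ x :=
    ((hasDerivAt_const x t).prodMk (hasDerivAt_id x)).hasDerivWithinAt
  exact hasDerivWithinAt_univ.mp (hF.comp_hasDerivWithinAt x hι fun _ _ ↦ ⟨ht, trivial⟩)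

lemma ContDiffOn.continuousOn_deriv_spaceSlice
    (hU : ContDiffOn ℝ 1 (fun p : ℝ × ℝ ↦ U p.1 p.2) (Ici 0 ×ˢ univ)) :
    ContinuousOn (fun p : ℝ × ℝ ↦ deriv (U p.1) p.2) (Ici 0 ×ˢ univ) :=
  ((hU.continuousOn_fderivWithin ((uniqueDiffOn_Ici 0).prod uniqueDiffOn_univ) le_rfl).clm_apply
    continuousOn_const).congr fun p hp ↦ (hU.hasDerivAt_spaceSlice hp.1 p.2).deriv

end Slices

def unitBump : ContDiffBump (0 : ℝ) := ⟨1, 2, one_pos, one_lt_two⟩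

def cutoff (n : ℕ) (x : ℝ) : ℝ := unitBump (x / (n + 1))

lemma contDiff_cutoff (n : ℕ) : ContDiff ℝ 1 (cutoff n) :=
  unitBump.contDiff.comp (contDiff_id.div_const _)

lemma hasCompactSupport_cutoff (n : ℕ) : HasCompactSupport (cutoff n) := by
  have hn : (0 : ℝ) < n + 1 := Nat.cast_add_one_pos n
  refine HasCompactSupport.intro (isCompact_closedBall 0 (2 * (n + 1))) fun x hx ↦ ?_
  refine unitBump.zero_of_le_dist ?_
  rw [Metric.mem_closedBall, dist_zero_right, Real.norm_eq_abs, not_le] at hx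
  rw [dist_zero_right, norm_div, Real.norm_eq_abs, Real.norm_eq_abs,
    abs_of_pos hn, le_div_iff₀ hn]
  exact hx.le

lemma cutoff_mem_Icc (n : ℕ) (x : ℝ) : cutoff n x ∈ Icc 0 1 :=
  ⟨unitBump.nonneg, unitBump.le_one⟩

lemma eventually_cutoff_eq_one (x : ℝ) : ∀ᶠ n : ℕ in atTop, cutoff n x = 1 := by
  filter_upwards [eventually_ge_atTop ⌈|x|⌉₊] with n hn
  have hn1 : (0 : ℝ) < n + 1 := Nat.cast_add_one_pos n
  refine unitBump.one_of_mem_closedBall ?_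
  rw [Metric.mem_closedBall, dist_zero_right, norm_div, Real.norm_eq_abs, Real.norm_eq_abs,
    abs_of_pos hn1, show unitBump.rIn = 1 from rfl, div_le_one hn1]
  have : (⌈|x|⌉₊ : ℝ) ≤ n := by exact_mod_cast hn
  linarith [Nat.le_ceil |x|]

lemma exists_norm_deriv_cutoff_le : ∃ C, ∀ n x, ‖deriv (cutoff n) x‖ ≤ C / (n + 1) := by
  obtain ⟨C, hC⟩ := unitBump.hasCompactSupport.deriv.exists_bound_of_continuous
    ((unitBump.contDiff (n := 1)).continuous_deriv le_rfl)
  refine ⟨C, fun n x ↦ ?_⟩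
  have hn : (0 : ℝ) < n + 1 := Nat.cast_add_one_pos n
  unfold cutoff
  have hderiv : HasDerivAt (fun y ↦ unitBump (y / (n + 1)))
      (deriv unitBump (x / (n + 1)) * ((n : ℝ) + 1)⁻¹) x := by
    have hbump := (unitBump.contDiff (n := 1)).differentiable one_ne_zero (x / (n + 1))
    simpa [Function.comp_def] using
      hbump.hasDerivAt.comp x ((hasDerivAt_id x).div_const ((n : ℝ) + 1))
  rw [hderiv.deriv, norm_mul, norm_inv, Real.norm_eq_abs (_ + 1), abs_of_pos hn, ← div_eq_mul_inv]
  gcongr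
  exact hC _

lemma integral_mul_sub_integral_mul_eq {χ : ℝ → ℝ} (hχ : Continuous χ) (hχc : HasCompactSupport χ)
    {ρ dρ : ℝ → ℝ → ℝ} {t : ℝ} (ht : 0 ≤ t)
    (hρ : ∀ s ≥ 0, ∀ x, HasDerivWithinAt (ρ · x) (dρ s x) (Ici 0) s)
    (hdρ : ContinuousOn (fun p : ℝ × ℝ ↦ dρ p.1 p.2) (Ici 0 ×ˢ univ))
    (hρ0 : Integrable (ρ 0)) (hρt : Integrable (ρ t)) :
    (∫ x, χ x * ρ t x) - ∫ x, χ x * ρ 0 x = ∫ s in 0..t, ∫ x, χ x * dρ s x := by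
  set D : ℝ → ℝ → ℝ := fun s x ↦ dρ (max s 0) x
  have hD : Continuous (fun p : ℝ × ℝ ↦ D p.1 p.2) := hdρ.continuous_comp_max_zero
  have hDx : ∀ x, Continuous (D · x) := fun x ↦ hD.comp (continuous_id.prodMk continuous_const)
  have hFTC : ∀ x, ρ t x - ρ 0 x = ∫ s in 0..t, D s x := fun x ↦ by
    rw [intervalIntegral.integral_eq_sub_of_hasDeriv_right_of_le ht
      (fun s hs ↦ (hρ s hs.1 x).continuousWithinAt.mono Icc_subset_Ici_self)
      (fun s hs ↦ by simpa [D, hs.1.le] using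
        (hρ s hs.1.le x).mono fun r hr ↦ (hs.1.trans (mem_Ioi.mp hr)).le)
      ((hDx x).intervalIntegrable 0 t)]
  obtain ⟨M, hM⟩ := hχ.bounded_above_of_compact_support hχc
  have hint : ∀ f : ℝ → ℝ, Integrable f → Integrable (fun x ↦ χ x * f x) := fun f hf ↦
    hf.bdd_mul hχ.aestronglyMeasurable (.of_forall hM)
  have hswap : Integrable (fun p : ℝ × ℝ ↦ χ p.2 * D p.1 p.2)
      ((volume.restrict (uIoc 0 t)).prod volume) := by
    have hcont : Continuous (fun p : ℝ × ℝ ↦ χ p.2 * D p.1 p.2) :=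
      (hχ.comp continuous_snd).mul hD
    have hK : IntegrableOn (fun p : ℝ × ℝ ↦ χ p.2 * D p.1 p.2) (Icc 0 t ×ˢ tsupport χ) :=
      hcont.continuousOn.integrableOn_compact (isCompact_Icc.prod hχc)
    have hstrip := (hK.of_forall_sdiff_eq_zero (measurableSet_Icc.prod MeasurableSet.univ)
      fun p hp ↦ by
        simp [image_eq_zero_of_notMem_tsupport fun h ↦ hp.2 ⟨hp.1.1, h⟩]).mono_set
      (prod_mono (uIoc_of_le ht ▸ Ioc_subset_Icc_self) subset_rfl)
    rwa [IntegrableOn, Measure.volume_eq_prod, ← Measure.prod_restrict,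
      Measure.restrict_univ] at hstrip
  calc (∫ x, χ x * ρ t x) - ∫ x, χ x * ρ 0 x
      = ∫ x, ∫ s in 0..t, χ x * D s x := by
        rw [← integral_sub (hint (ρ t) hρt) (hint (ρ 0) hρ0)]
        simp_rw [← mul_sub, hFTC, intervalIntegral.integral_const_mul]
    _ = ∫ s in 0..t, ∫ x, χ x * D s x := (intervalIntegral_integral_swap hswap).symm
    _ = ∫ s in 0..t, ∫ x, χ x * dρ s x :=
        intervalIntegral.integral_congr fun s hs ↦ by
          simp [D, (uIcc_of_le ht ▸ hs : s ∈ Icc 0 t).1]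

lemma abs_integral_mul_deriv_le {χ j dj : ℝ → ℝ} {M : ℝ} (hχ : ContDiff ℝ 1 χ)
    (hχc : HasCompactSupport χ) (hχ' : ∀ x, ‖deriv χ x‖ ≤ M)
    (hj : ∀ x, HasDerivAt j (dj x) x) (hdj : Continuous dj) (hji : Integrable j) :
    |∫ x, χ x * dj x| ≤ M * ∫ x, |j x| := by
  have hχ'c : Continuous (deriv χ) := hχ.continuous_deriv le_rfl
  obtain ⟨M', hM'⟩ := hχ.continuous.bounded_above_of_compact_support hχc
  have hibp := integral_mul_deriv_eq_deriv_mul_of_integrable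
    (fun x _ ↦ (hχ.differentiable one_ne_zero x).hasDerivAt) (fun x _ ↦ hj x)
    ((hχ.continuous.mul hdj).integrable_of_hasCompactSupport hχc.mul_right)
    (hji.bdd_mul hχ'c.aestronglyMeasurable (.of_forall hχ'))
    (hji.bdd_mul hχ.continuous.aestronglyMeasurable (.of_forall hM'))
  rw [hibp, abs_neg, ← Real.norm_eq_abs, ← integral_const_mul]
  refine norm_integral_le_of_norm_le ((hji.abs).const_mul M) (.of_forall fun x ↦ ?_)
  rw [norm_mul, Real.norm_eq_abs (j x)]
  exact mul_le_mul_of_nonneg_right (hχ' x) (abs_nonneg _)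

lemma tendsto_integral_cutoff_mul {f : ℝ → ℝ} (hf : Integrable f) :
    Tendsto (fun n ↦ ∫ x, cutoff n x * f x) atTop (𝓝 (∫ x, f x)) := by
  refine tendsto_integral_of_dominated_convergence (fun x ↦ ‖f x‖)
    (fun n ↦ ((contDiff_cutoff n).continuous.aestronglyMeasurable).mul hf.1) hf.norm
    (fun n ↦ .of_forall fun x ↦ ?_) (.of_forall fun x ↦ ?_)
  · rw [norm_mul]
    exact mul_le_of_le_one_left (norm_nonneg _) (by
      rw [Real.norm_eq_abs, abs_of_nonneg (cutoff_mem_Icc n x).1]; exact (cutoff_mem_Icc n x).2)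
  · refine tendsto_const_nhds.congr' ?_
    filter_upwards [eventually_cutoff_eq_one x] with n hn
    rw [hn, one_mul]

theorem integral_eq_of_continuity_equation {ρ j dj : ℝ → ℝ → ℝ} {t B : ℝ} (ht : 0 ≤ t)
    (hρ : ∀ s ≥ 0, ∀ x, HasDerivWithinAt (ρ · x) (-dj s x) (Ici 0) s)
    (hj : ∀ s ≥ 0, ∀ x, HasDerivAt (j s) (dj s x) x)
    (hdj : ContinuousOn (fun p : ℝ × ℝ ↦ dj p.1 p.2) (Ici 0 ×ˢ univ))
    (hρi : ∀ s ≥ 0, Integrable (ρ s)) (hjρ : ∀ s ≥ 0, ∀ x, |j s x| ≤ ρ s x)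
    (hB : ∀ s ∈ Icc 0 t, ∫ x, ρ s x ≤ B) :
    ∫ x, ρ t x = ∫ x, ρ 0 x := by
  -- Tested against `cutoff n`, the flux term is `O(1/n)` uniformly on `[0, t]`, because
  -- `|∂ₓ cutoff n| = O(1/n)` while `∫ |j s| ≤ ∫ ρ s ≤ B`.
  obtain ⟨C, hC⟩ := exists_norm_deriv_cutoff_le
  have hC0 : 0 ≤ C := by simpa using (norm_nonneg _).trans (hC 0 0)
  have hbound : ∀ n : ℕ, |(∫ x, cutoff n x * ρ t x) - ∫ x, cutoff n x * ρ 0 x| ≤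
      C / (n + 1) * B * |t - 0| := fun n ↦ by
    rw [integral_mul_sub_integral_mul_eq (contDiff_cutoff n).continuous
      (hasCompactSupport_cutoff n) ht hρ hdj.neg (hρi 0 le_rfl) (hρi t ht), ← Real.norm_eq_abs]
    refine intervalIntegral.norm_integral_le_of_norm_le_const fun s hs ↦ ?_
    rw [uIoc_of_le ht] at hs
    have hs0 : 0 ≤ s := hs.1.le
    have hjs : Integrable (j s) :=
      (hρi s hs0).mono' (continuous_iff_continuousAt.mpr fun x ↦
        (hj s hs0 x).continuousAt).aestronglyMeasurable (.of_forall (hjρ s hs0))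
    calc ‖∫ x, cutoff n x * -dj s x‖ = |∫ x, cutoff n x * dj s x| := by
          simp [integral_neg]
      _ ≤ C / (n + 1) * ∫ x, |j s x| :=
          abs_integral_mul_deriv_le (contDiff_cutoff n) (hasCompactSupport_cutoff n) (hC n)
            (hj s hs0) (hdj.continuous_slice hs0) hjs
      _ ≤ C / (n + 1) * B := by
          gcongr
          exact (integral_mono hjs.abs (hρi s hs0) (hjρ s hs0)).trans (hB s ⟨hs0, hs.2⟩)
  have hlim := (tendsto_integral_cutoff_mul (hρi t ht)).sub
    (tendsto_integral_cutoff_mul (hρi 0 le_rfl))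
  have hzero : Tendsto (fun n : ℕ ↦ (∫ x, cutoff n x * ρ t x) - ∫ x, cutoff n x * ρ 0 x)
      atTop (𝓝 0) := by
    refine squeeze_zero_norm hbound ?_
    have : Tendsto (fun n : ℕ ↦ C / ((n : ℝ) + 1)) atTop (𝓝 0) :=
      tendsto_const_div_atTop_nhds_zero_nat C |>.comp (tendsto_add_atTop_nat 1) |>.congr
        fun n ↦ by simp
    simpa using (this.mul_const B).mul_const |t - 0|
  exact sub_eq_zero.mp (tendsto_nhds_unique hlim hzero)

open Classical in
def toL2 (f : ℝ → ℂ) : Lp ℂ 2 (volume : Measure ℝ) :=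
  if hf : MemLp f 2 then hf.toLp f else 0

lemma coeFn_toL2 {f : ℝ → ℂ} (hf : MemLp f 2) : toL2 f =ᵐ[volume] f := by
  rw [toL2, dif_pos hf]
  exact hf.coeFn_toLp

lemma norm_sub_sq_eq_integral {f g : ℝ → ℂ} {F G : Lp ℂ 2 (volume : Measure ℝ)}
    (hf : F =ᵐ[volume] f) (hg : G =ᵐ[volume] g) :
    ‖F - G‖ ^ 2 = ∫ x, Complex.normSq (f x - g x) := by
  rw [← inner_self_eq_norm_sq (𝕜 := ℂ), L2.inner_def, ← integral_re (L2.integrable_inner _ _)]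
  refine integral_congr_ae ?_
  filter_upwards [Lp.coeFn_sub F G, hf, hg] with x hx hfx hgx
  rw [hx, Pi.sub_apply, hfx, hgx, inner_self_eq_norm_sq, Complex.normSq_eq_norm_sq]

lemma l2dist_eq_norm_sub {f g : ℝ → ℂ} {F G : Lp ℂ 2 (volume : Measure ℝ)}
    (hf : F =ᵐ[volume] f) (hg : G =ᵐ[volume] g) : l2dist f g = ‖F - G‖ := by
  rw [l2dist, ← norm_sub_sq_eq_integral hf hg, Real.sqrt_sq (norm_nonneg _)]

lemma l2dist_eq_dist_toL2 {f g : ℝ → ℂ} (hf : MemLp f 2) (hg : MemLp g 2) :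
    l2dist f g = dist (toL2 f) (toL2 g) := by
  rw [dist_eq_norm, l2dist_eq_norm_sub (coeFn_toL2 hf) (coeFn_toL2 hg)]

lemma sq_l2dist (f g : ℝ → ℂ) : l2dist f g ^ 2 = ∫ x, Complex.normSq (f x - g x) :=
  Real.sq_sqrt (integral_nonneg fun _ ↦ Complex.normSq_nonneg _)

lemma norm_toL2_sq {f : ℝ → ℂ} (hf : MemLp f 2) :
    ‖toL2 f‖ ^ 2 = ∫ x, Complex.normSq (f x) := by
  simpa using norm_sub_sq_eq_integral (coeFn_toL2 hf) (Lp.coeFn_zero ℂ 2 volume)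

lemma inner_toL2 {f g : ℝ → ℂ} (hf : MemLp f 2) (hg : MemLp g 2) :
    inner ℂ (toL2 f) (toL2 g) = ∫ x, starRingEnd ℂ (f x) * g x := by
  rw [L2.inner_def]
  refine integral_congr_ae ?_
  filter_upwards [coeFn_toL2 hf, coeFn_toL2 hg] with x hfx hgx
  rw [hfx, hgx, RCLike.inner_apply, mul_comm]

theorem tendsto_of_tendsto_inner_of_norm_sq_add {𝕜 E ι : Type*} [RCLike 𝕜]
    [NormedAddCommGroup E] [InnerProductSpace 𝕜 E] {l : Filter ι} {x y : ι → E} {a b : E}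
    (hnorm : Tendsto (fun i ↦ ‖x i‖ ^ 2 + ‖y i‖ ^ 2) l (𝓝 (‖a‖ ^ 2 + ‖b‖ ^ 2)))
    (hx : Tendsto (fun i ↦ inner 𝕜 a (x i)) l (𝓝 (inner 𝕜 a a)))
    (hy : Tendsto (fun i ↦ inner 𝕜 b (y i)) l (𝓝 (inner 𝕜 b b))) :
    Tendsto x l (𝓝 a) ∧ Tendsto y l (𝓝 b) := by
  have hsum : Tendsto (fun i ↦ ‖x i - a‖ ^ 2 + ‖y i - b‖ ^ 2) l (𝓝 0) := by
    have hre := hnorm.add (((RCLike.continuous_re.tendsto _).comp hx).add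
      ((RCLike.continuous_re.tendsto _).comp hy) |>.const_mul (-2))
    simp only [Function.comp_def, inner_self_eq_norm_sq] at hre
    convert hre.add_const (‖a‖ ^ 2 + ‖b‖ ^ 2) using 1
    · ext i
      rw [norm_sub_sq (𝕜 := 𝕜), norm_sub_sq (𝕜 := 𝕜), inner_re_symm (x i), inner_re_symm (y i)]
      ring
    · ring_nf
  have hsmall : ∀ r : ι → ℝ, (∀ i, 0 ≤ r i) →
      (∀ i, r i ^ 2 ≤ ‖x i - a‖ ^ 2 + ‖y i - b‖ ^ 2) → Tendsto r l (𝓝 0) := fun r hr hle ↦ by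
    simpa [Real.sqrt_sq (hr _)] using (squeeze_zero (fun _ ↦ sq_nonneg _) hle hsum).sqrt
  exact ⟨tendsto_iff_norm_sub_tendsto_zero.mpr <| hsmall _ (fun _ ↦ norm_nonneg _) fun _ ↦
      le_add_of_nonneg_right (sq_nonneg _),
    tendsto_iff_norm_sub_tendsto_zero.mpr <| hsmall _ (fun _ ↦ norm_nonneg _) fun _ ↦
      le_add_of_nonneg_left (sq_nonneg _)⟩

lemma continuousOn_integral_mul_slice {u : ℝ → ℝ → ℂ}
    (hu : ContinuousOn (fun p : ℝ × ℝ ↦ u p.1 p.2) (Ici 0 ×ˢ univ)) {φ : ℝ → ℂ}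
    (hφ : Continuous φ) (hφc : HasCompactSupport φ) :
    ContinuousOn (fun s ↦ ∫ x, φ x * u s x) (Ici 0) := by
  have hcont : Continuous (fun s ↦ ∫ x in tsupport φ, φ x * u (max s 0) x) :=
    continuous_parametric_integral_of_continuous
      ((hφ.comp continuous_snd).mul hu.continuous_comp_max_zero) hφc
  refine hcont.continuousOn.congr fun s hs ↦ ?_
  simp only [max_eq_left (mem_Ici.mp hs)]
  exact (setIntegral_eq_integral_of_forall_compl_eq_zero fun x hx ↦ by
    rw [image_eq_zero_of_notMem_tsupport hx, zero_mul]).symm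

lemma tendsto_inner_toL2_slice {w : ℝ → ℝ → ℂ}
    (hw : ContinuousOn (fun p : ℝ × ℝ ↦ w p.1 p.2) (Ici 0 ×ˢ univ))
    (hwL2 : ∀ s ≥ 0, MemLp (w s) 2) {t : ℝ} (ht : 0 ≤ t) (hwt : HasCompactSupport (w t)) :
    Tendsto (fun s ↦ inner ℂ (toL2 (w t)) (toL2 (w s))) (𝓝[Ici 0] t)
      (𝓝 (inner ℂ (toL2 (w t)) (toL2 (w t)))) := by
  have hcont := continuousOn_integral_mul_slice hw
    (Complex.continuous_conj.comp (hw.continuous_slice ht))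
    (hwt.comp_left (map_zero (starRingEnd ℂ))) t ht
  rw [inner_toL2 (hwL2 t ht) (hwL2 t ht)]
  refine hcont.tendsto.congr' ?_
  filter_upwards [self_mem_nhdsWithin] with s hs
  exact (inner_toL2 (hwL2 t ht) (hwL2 s hs)).symm

theorem exists_continuousOn_tendstoUniformlyOn_Icc {X : Type*} [UniformSpace X] [CompleteSpace X]
    {F : ℕ → ℝ → X} (hF : ∀ k, ContinuousOn (F k) (Ici 0))
    (hFc : ∀ T ≥ 0, UniformCauchySeqOn F atTop (Icc 0 T)) :
    ∃ G : ℝ → X, ContinuousOn G (Ici 0) ∧ ∀ T ≥ 0, TendstoUniformlyOn F G atTop (Icc 0 T) := by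
  have hlim : ∀ t, ∃ x, 0 ≤ t → Tendsto (F · t) atTop (𝓝 x) := fun t ↦ by
    by_cases ht : 0 ≤ t
    · obtain ⟨x, hx⟩ := cauchySeq_tendsto_of_complete ((hFc t ht).cauchySeq ⟨ht, le_rfl⟩)
      exact ⟨x, fun _ ↦ hx⟩
    · exact ⟨F 0 t, fun h ↦ absurd h ht⟩
  choose G hG using hlim
  have hunif : ∀ T ≥ 0, TendstoUniformlyOn F G atTop (Icc 0 T) := fun T hT ↦
    (hFc T hT).tendstoUniformlyOn_of_tendsto fun t ht ↦ hG t ht.1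
  refine ⟨G, fun t ht ↦ ?_, hunif⟩
  have hcont : ContinuousOn G (Icc 0 (t + 1)) :=
    (hunif _ (by linarith [mem_Ici.mp ht])).continuousOn
      (Frequently.of_forall fun k ↦ (hF k).mono Icc_subset_Ici_self)
  have hnhds : Icc 0 (t + 1) ∈ 𝓝[Ici 0] t := by
    rw [← Ici_inter_Iic]
    exact inter_mem_nhdsWithin _ (Iic_mem_nhds (lt_add_one t))
  exact (hcont t ⟨ht, (lt_add_one t).le⟩).mono_of_mem_nhdsWithin hnhds

lemma dist_toL2_prod_le {f₁ f₂ g₁ g₂ : ℝ → ℂ} (hf₁ : MemLp f₁ 2) (hf₂ : MemLp f₂ 2)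
    (hg₁ : MemLp g₁ 2) (hg₂ : MemLp g₂ 2) :
    dist (toL2 f₁, toL2 g₁) (toL2 f₂, toL2 g₂) ≤ l2dist f₁ f₂ + l2dist g₁ g₂ := by
  rw [Prod.dist_eq, l2dist_eq_dist_toL2 hf₁ hf₂, l2dist_eq_dist_toL2 hg₁ hg₂]
  exact max_le (le_add_of_nonneg_right dist_nonneg) (le_add_of_nonneg_left dist_nonneg)

lemma l2dist_add_l2dist_le_two_mul_dist {f g : ℝ → ℂ}
    {P Q : Lp ℂ 2 (volume : Measure ℝ) × Lp ℂ 2 (volume : Measure ℝ)}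
    (hf : P.1 =ᵐ[volume] f) (hg : P.2 =ᵐ[volume] g) :
    l2dist f Q.1 + l2dist g Q.2 ≤ 2 * dist P Q := by
  rw [l2dist_eq_norm_sub hf .rfl, l2dist_eq_norm_sub hg .rfl, ← dist_eq_norm, ← dist_eq_norm,
    two_mul, Prod.dist_eq]
  exact add_le_add (le_max_left _ _) (le_max_right _ _)

theorem exists_l2_limit {f g : ℕ → ℝ → ℝ → ℂ}
    (hfg : ∀ k, ∀ t ≥ 0, MemLp (f k t) 2 ∧ MemLp (g k t) 2)
    (hcont : ∀ k, ∀ t ≥ 0, Tendsto (fun s ↦ l2dist (f k s) (f k t) + l2dist (g k s) (g k t))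
      (𝓝[Ici 0] t) (𝓝 0))
    (hcauchy : ∀ T ≥ 0, ∀ ε > 0, ∃ N : ℕ, ∀ k ≥ N, ∀ j ≥ N, ∀ t ∈ Icc (0 : ℝ) T,
      l2dist (f k t) (f j t) + l2dist (g k t) (g j t) < ε) :
    ∃ finf ginf : ℝ → ℝ → ℂ,
      (∀ t ∈ Ici (0 : ℝ), ∀ ε > 0, ∃ η > 0, ∀ s ∈ Ici (0 : ℝ), |s - t| < η →
        l2dist (finf s) (finf t) + l2dist (ginf s) (ginf t) < ε) ∧
      (∀ T ≥ 0, ∀ ε > 0, ∃ N : ℕ, ∀ k ≥ N, ∀ t ∈ Icc (0 : ℝ) T,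
        l2dist (f k t) (finf t) + l2dist (g k t) (ginf t) < ε) := by
  set F : ℕ → ℝ → Lp ℂ 2 (volume : Measure ℝ) × Lp ℂ 2 (volume : Measure ℝ) :=
    fun k t ↦ (toL2 (f k t), toL2 (g k t))
  have hdist : ∀ k j, ∀ s ≥ 0, ∀ t ≥ 0,
      dist (F k s) (F j t) ≤ l2dist (f k s) (f j t) + l2dist (g k s) (g j t) :=
    fun k j s hs t ht ↦ dist_toL2_prod_le (hfg k s hs).1 (hfg j t ht).1 (hfg k s hs).2
      (hfg j t ht).2
  have hFcont : ∀ k, ContinuousOn (F k) (Ici 0) := fun k t ht ↦ by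
    refine tendsto_iff_dist_tendsto_zero.mpr
      (squeeze_zero' (.of_forall fun _ ↦ dist_nonneg) ?_ (hcont k t ht))
    filter_upwards [self_mem_nhdsWithin] with s hs using hdist k k s hs t ht
  have hFc : ∀ T ≥ 0, UniformCauchySeqOn F atTop (Icc 0 T) := fun T hT ↦
    Metric.uniformCauchySeqOn_iff.mpr fun ε hε ↦ by
      obtain ⟨N, hN⟩ := hcauchy T hT ε hε
      exact ⟨N, fun k hk j hj t ht ↦ (hdist k j t ht.1 t ht.1).trans_lt (hN k hk j hj t ht)⟩
  obtain ⟨G, hGcont, hGlim⟩ := exists_continuousOn_tendstoUniformlyOn_Icc hFcont hFc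
  refine ⟨fun t ↦ (G t).1, fun t ↦ (G t).2, fun t ht ε hε ↦ ?_, fun T hT ε hε ↦ ?_⟩
  · obtain ⟨η, hη, hG⟩ := Metric.continuousWithinAt_iff.mp (hGcont t ht) (ε / 2) (half_pos hε)
    refine ⟨η, hη, fun s hs hst ↦ ?_⟩
    have := l2dist_add_l2dist_le_two_mul_dist (Q := G t) (EventuallyEq.refl _ _)
      (EventuallyEq.refl _ (G s).2)
    linarith [hG hs hst]
  · obtain ⟨N, hN⟩ := eventually_atTop.mp
      (Metric.tendstoUniformlyOn_iff.mp (hGlim T hT) (ε / 2) (half_pos hε))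
    refine ⟨N, fun k hk t ht ↦ ?_⟩
    have := l2dist_add_l2dist_le_two_mul_dist (P := F k t) (Q := G t)
      (coeFn_toL2 (hfg k t ht.1).1) (coeFn_toL2 (hfg k t ht.1).2)
    linarith [dist_comm (F k t) (G t), hN k hk t ht]

lemma HasDerivWithinAt.complex_normSq {f : ℝ → ℂ} {f' : ℂ} {s : Set ℝ} {x : ℝ}
    (hf : HasDerivWithinAt f f' s x) :
    HasDerivWithinAt (fun y ↦ Complex.normSq (f y)) (2 * (starRingEnd ℂ (f x) * f').re) s x := by
  simpa only [Complex.normSq_eq_norm_sq, Complex.inner, mul_comm f'] using hf.norm_sq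

lemma HasDerivAt.complex_normSq {f : ℝ → ℂ} {f' : ℂ} {x : ℝ} (hf : HasDerivAt f f' x) :
    HasDerivAt (fun y ↦ Complex.normSq (f y)) (2 * (starRingEnd ℂ (f x) * f').re) x :=
  hasDerivWithinAt_univ.mp hf.hasDerivWithinAt.complex_normSq

lemma SatisfiesA2.density_balance {N1 N2 : ℂ → ℂ → ℂ} (hA2 : SatisfiesA2 N1 N2) (m : ℝ)
    {a b aₜ bₜ aₓ bₓ : ℂ} (ha : Complex.I * (aₜ + aₓ) = -(m : ℂ) * b + N1 a b)
    (hb : Complex.I * (bₜ - bₓ) = -(m : ℂ) * a + N2 a b) :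
    2 * (starRingEnd ℂ a * aₜ).re + 2 * (starRingEnd ℂ b * bₜ).re =
      -(2 * (starRingEnd ℂ a * aₓ).re - 2 * (starRingEnd ℂ b * bₓ).re) := by
  have key : starRingEnd ℂ a * (aₜ + aₓ) + starRingEnd ℂ b * (bₜ - bₓ) =
      Complex.I * m * (starRingEnd ℂ a * b + starRingEnd ℂ b * a) -
        (Complex.I * starRingEnd ℂ a * N1 a b + Complex.I * starRingEnd ℂ b * N2 a b) := by
    linear_combination (-Complex.I * starRingEnd ℂ a) * ha + (-Complex.I * starRingEnd ℂ b) * hb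
      + (starRingEnd ℂ a * (aₜ + aₓ) + starRingEnd ℂ b * (bₜ - bₓ)) * Complex.I_sq
  have hre := congrArg Complex.re key
  have h2 := hA2 a b
  simp only [Complex.add_re, Complex.sub_re, Complex.mul_re, Complex.mul_im, Complex.I_re,
    Complex.I_im, Complex.conj_re, Complex.conj_im, Complex.ofReal_re, Complex.ofReal_im,
    Complex.add_im, Complex.sub_im] at hre h2 ⊢
  linarith

namespace IsGlobalDiracSolution

variable {m : ℝ} {N1 N2 : ℂ → ℂ → ℂ} {u v : ℝ → ℝ → ℂ}

lemma memLp (hsol : IsGlobalDiracSolution m N1 N2 u v)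
    (hcs : ∀ t ∈ Ici (0 : ℝ), HasCompactSupport (u t) ∧ HasCompactSupport (v t))
    {t : ℝ} (ht : 0 ≤ t) : MemLp (u t) 2 ∧ MemLp (v t) 2 :=
  ⟨(hsol.1.continuousOn.continuous_slice ht).memLp_of_hasCompactSupport (hcs t ht).1,
    (hsol.2.1.continuousOn.continuous_slice ht).memLp_of_hasCompactSupport (hcs t ht).2⟩

lemma integrable_normSq (hsol : IsGlobalDiracSolution m N1 N2 u v)
    (hcs : ∀ t ∈ Ici (0 : ℝ), HasCompactSupport (u t) ∧ HasCompactSupport (v t))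
    {t : ℝ} (ht : 0 ≤ t) :
    Integrable (fun x ↦ Complex.normSq (u t x)) ∧ Integrable (fun x ↦ Complex.normSq (v t x)) :=
  ⟨(Complex.continuous_normSq.comp (hsol.1.continuousOn.continuous_slice ht))
      |>.integrable_of_hasCompactSupport ((hcs t ht).1.comp_left Complex.normSq.map_zero),
    (Complex.continuous_normSq.comp (hsol.2.1.continuousOn.continuous_slice ht))
      |>.integrable_of_hasCompactSupport ((hcs t ht).2.comp_left Complex.normSq.map_zero)⟩

lemma L0fun_eq_add (hsol : IsGlobalDiracSolution m N1 N2 u v)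
    (hcs : ∀ t ∈ Ici (0 : ℝ), HasCompactSupport (u t) ∧ HasCompactSupport (v t))
    {t : ℝ} (ht : 0 ≤ t) :
    L0fun u v t = (∫ x, Complex.normSq (u t x)) + ∫ x, Complex.normSq (v t x) :=
  integral_add (hsol.integrable_normSq hcs ht).1 (hsol.integrable_normSq hcs ht).2

theorem L0fun_eq (hA2 : SatisfiesA2 N1 N2) (hsol : IsGlobalDiracSolution m N1 N2 u v)
    (hcs : ∀ t ∈ Ici (0 : ℝ), HasCompactSupport (u t) ∧ HasCompactSupport (v t))
    (hbd : ∀ T ≥ 0, ∃ B, ∀ s ∈ Icc 0 T, L0fun u v s ≤ B) {t : ℝ} (ht : 0 ≤ t) :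
    L0fun u v t = L0fun u v 0 := by
  obtain ⟨hu, hv, hequ, heqv⟩ := id hsol
  obtain ⟨B, hB⟩ := hbd t ht
  have hux : ∀ s ≥ 0, ∀ x, HasDerivAt (u s) (deriv (u s) x) x := fun s hs x ↦
    (hu.hasDerivAt_spaceSlice hs x).differentiableAt.hasDerivAt
  have hvx : ∀ s ≥ 0, ∀ x, HasDerivAt (v s) (deriv (v s) x) x := fun s hs x ↦
    (hv.hasDerivAt_spaceSlice hs x).differentiableAt.hasDerivAt
  refine integral_eq_of_continuity_equation
    (j := fun s x ↦ Complex.normSq (u s x) - Complex.normSq (v s x))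
    (dj := fun s x ↦ 2 * (starRingEnd ℂ (u s x) * deriv (u s) x).re -
      2 * (starRingEnd ℂ (v s x) * deriv (v s) x).re) ht
    (fun s hs x ↦ ?_) (fun s hs x ↦ ((hux s hs x).complex_normSq).sub (hvx s hs x).complex_normSq)
    ?_ (fun s hs ↦ ?_) (fun s hs x ↦ ?_) hB
  · refine ((hu.hasDerivWithinAt_timeSlice hs x).complex_normSq.add
      (hv.hasDerivWithinAt_timeSlice hs x).complex_normSq).congr_deriv ?_
    exact hA2.density_balance m (hequ s hs x) (heqv s hs x)
  · have := hu.continuousOn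
    have := hv.continuousOn
    have := hu.continuousOn_deriv_spaceSlice
    have := hv.continuousOn_deriv_spaceSlice
    fun_prop
  · exact (hsol.integrable_normSq hcs hs).1.add (hsol.integrable_normSq hcs hs).2
  · have hu0 := Complex.normSq_nonneg (u s x)
    have hv0 := Complex.normSq_nonneg (v s x)
    exact abs_sub_le_iff.mpr ⟨by linarith, by linarith⟩

theorem tendsto_l2dist (hA2 : SatisfiesA2 N1 N2) (hsol : IsGlobalDiracSolution m N1 N2 u v)
    (hcs : ∀ t ∈ Ici (0 : ℝ), HasCompactSupport (u t) ∧ HasCompactSupport (v t))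
    (hbd : ∀ T ≥ 0, ∃ B, ∀ s ∈ Icc 0 T, L0fun u v s ≤ B) {t : ℝ} (ht : 0 ≤ t) :
    Tendsto (fun s ↦ l2dist (u s) (u t) + l2dist (v s) (v t)) (𝓝[Ici 0] t) (𝓝 0) := by
  have hnorm : ∀ s ≥ 0, ‖toL2 (u s)‖ ^ 2 + ‖toL2 (v s)‖ ^ 2 = L0fun u v 0 := fun s hs ↦ by
    rw [norm_toL2_sq (hsol.memLp hcs hs).1, norm_toL2_sq (hsol.memLp hcs hs).2,
      ← hsol.L0fun_eq_add hcs hs, hsol.L0fun_eq hA2 hcs hbd hs]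
  have hconst : Tendsto (fun s ↦ ‖toL2 (u s)‖ ^ 2 + ‖toL2 (v s)‖ ^ 2) (𝓝[Ici 0] t)
      (𝓝 (‖toL2 (u t)‖ ^ 2 + ‖toL2 (v t)‖ ^ 2)) := by
    rw [hnorm t ht]
    exact tendsto_const_nhds.congr' (eventually_nhdsWithin_of_forall fun s hs ↦ (hnorm s hs).symm)
  obtain ⟨hU, hV⟩ := tendsto_of_tendsto_inner_of_norm_sq_add hconst
    (tendsto_inner_toL2_slice hsol.1.continuousOn (fun s hs ↦ (hsol.memLp hcs hs).1) ht
      (hcs t ht).1)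
    (tendsto_inner_toL2_slice hsol.2.1.continuousOn (fun s hs ↦ (hsol.memLp hcs hs).2) ht
      (hcs t ht).2)
  have hdist := (tendsto_iff_dist_tendsto_zero.mp hU).add (tendsto_iff_dist_tendsto_zero.mp hV)
  rw [add_zero] at hdist
  refine hdist.congr' ?_
  filter_upwards [self_mem_nhdsWithin] with s hs
  rw [l2dist_eq_dist_toL2 (hsol.memLp hcs hs).1 (hsol.memLp hcs ht).1,
    l2dist_eq_dist_toL2 (hsol.memLp hcs hs).2 (hsol.memLp hcs ht).2]

end IsGlobalDiracSolution

lemma add_le_sqrt_two_mul_mul_add {a b p q E : ℝ} (hp : 0 ≤ p) (hq : 0 ≤ q) (hE : 0 ≤ E) (h : a ^ 2 + b ^ 2 ≤ (p ^ 2 + q ^ 2) * E) :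
    a + b ≤ √(2 * E) * (p + q) := by
  rw [← Real.sqrt_sq (add_nonneg hp hq), ← Real.sqrt_mul (by positivity)]
  refine Real.le_sqrt_of_sq_le ?_
  nlinarith [sq_nonneg (a - b), mul_nonneg (mul_nonneg hp hq) hE]

lemma isGlobalDiracSolution_zero {m : ℝ} {N1 N2 : ℂ → ℂ → ℂ} (hA1 : SatisfiesA1 N1 N2) :
    IsGlobalDiracSolution m N1 N2 (fun _ _ ↦ 0) (fun _ _ ↦ 0) := by
  obtain ⟨a1, a2, a3, a4, a5, b1, b2, b3, b4, b5, hN1, hN2⟩ := hA1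
  refine ⟨contDiffOn_const, contDiffOn_const, fun t ht x ↦ ?_, fun t ht x ↦ ?_⟩ <;>
    simp [hN1, hN2]

def SatisfiesL2Stability (m : ℝ) (N1 N2 : ℂ → ℂ → ℂ) (δ c1 c2 c3 : ℝ) : Prop :=
  ∀ u v u' v' : ℝ → ℝ → ℂ,
    IsGlobalDiracSolution m N1 N2 u v → IsGlobalDiracSolution m N1 N2 u' v' →
    (∀ t ∈ Ici (0 : ℝ), HasCompactSupport (u t) ∧ HasCompactSupport (v t) ∧
      HasCompactSupport (u' t) ∧ HasCompactSupport (v' t)) →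
    (∫ x, Complex.normSq (u 0 x)) + (∫ x, Complex.normSq (v 0 x)) < δ →
    (∫ x, Complex.normSq (u' 0 x)) + (∫ x, Complex.normSq (v' 0 x)) < δ →
    ∀ t ∈ Ici (0 : ℝ),
      (∫ x, Complex.normSq (u t x - u' t x)) + (∫ x, Complex.normSq (v t x - v' t x)) ≤
        ((∫ x, Complex.normSq (u 0 x - u' 0 x)) + (∫ x, Complex.normSq (v 0 x - v' 0 x))) *
          (c1 * Real.exp (c2 * t + c3))

namespace SatisfiesL2Stability

variable {m δ c1 c2 c3 : ℝ} {N1 N2 : ℂ → ℂ → ℂ} {u v u' v' : ℝ → ℝ → ℂ}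

lemma exists_L0fun_le (hst : SatisfiesL2Stability m N1 N2 δ c1 c2 c3) (hc1 : 0 ≤ c1)
    (hc2 : 0 ≤ c2) (hA1 : SatisfiesA1 N1 N2) (hδ : 0 < δ)
    (hsol : IsGlobalDiracSolution m N1 N2 u v)
    (hcs : ∀ t ∈ Ici (0 : ℝ), HasCompactSupport (u t) ∧ HasCompactSupport (v t))
    (hcharge : (∫ x, Complex.normSq (u 0 x)) + (∫ x, Complex.normSq (v 0 x)) < δ) :
    ∀ T ≥ 0, ∃ B, ∀ s ∈ Icc 0 T, L0fun u v s ≤ B := fun T _ ↦ by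
  refine ⟨L0fun u v 0 * (c1 * Real.exp (c2 * T + c3)), fun s hs ↦ ?_⟩
  have h := hst u v _ _ hsol (isGlobalDiracSolution_zero hA1)
    (fun t ht ↦ ⟨(hcs t ht).1, (hcs t ht).2, HasCompactSupport.zero, HasCompactSupport.zero⟩)
    hcharge (by simpa using hδ) s hs.1
  simp only [sub_zero, ← hsol.L0fun_eq_add hcs hs.1, ← hsol.L0fun_eq_add hcs le_rfl] at h
  refine h.trans (mul_le_mul_of_nonneg_left ?_ (integral_nonneg fun _ ↦
    add_nonneg (Complex.normSq_nonneg _) (Complex.normSq_nonneg _)))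
  gcongr
  exact hs.2

lemma l2dist_add_le (hst : SatisfiesL2Stability m N1 N2 δ c1 c2 c3) (hc1 : 0 ≤ c1)
    (hc2 : 0 ≤ c2) (hsol : IsGlobalDiracSolution m N1 N2 u v)
    (hsol' : IsGlobalDiracSolution m N1 N2 u' v')
    (hcs : ∀ t ∈ Ici (0 : ℝ), HasCompactSupport (u t) ∧ HasCompactSupport (v t))
    (hcs' : ∀ t ∈ Ici (0 : ℝ), HasCompactSupport (u' t) ∧ HasCompactSupport (v' t))
    (hcharge : (∫ x, Complex.normSq (u 0 x)) + (∫ x, Complex.normSq (v 0 x)) < δ)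
    (hcharge' : (∫ x, Complex.normSq (u' 0 x)) + (∫ x, Complex.normSq (v' 0 x)) < δ)
    {T t : ℝ} (ht : t ∈ Icc 0 T) :
    l2dist (u t) (u' t) + l2dist (v t) (v' t) ≤
      √(2 * (c1 * Real.exp (c2 * T + c3))) * (l2dist (u 0) (u' 0) + l2dist (v 0) (v' 0)) := by
  have h := hst u v u' v' hsol hsol'
    (fun t ht ↦ ⟨(hcs t ht).1, (hcs t ht).2, (hcs' t ht).1, (hcs' t ht).2⟩) hcharge hcharge' t ht.1
  simp only [← sq_l2dist] at h
  refine add_le_sqrt_two_mul_mul_add (Real.sqrt_nonneg _) (Real.sqrt_nonneg _)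
    (mul_nonneg hc1 (Real.exp_pos _).le) (h.trans ?_)
  gcongr
  exact ht.2

lemma cauchy_of_initial_cauchy (hst : SatisfiesL2Stability m N1 N2 δ c1 c2 c3) (hc1 : 0 ≤ c1)
    (hc2 : 0 ≤ c2) {U V : ℕ → ℝ → ℝ → ℂ} (hsol : ∀ k, IsGlobalDiracSolution m N1 N2 (U k) (V k))
    (hcs : ∀ k, ∀ t ∈ Ici (0 : ℝ), HasCompactSupport (U k t) ∧ HasCompactSupport (V k t))
    (hcharge : ∀ k, (∫ x, Complex.normSq (U k 0 x)) + (∫ x, Complex.normSq (V k 0 x)) < δ)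
    (hcauchy : ∀ ε > 0, ∃ N : ℕ, ∀ k ≥ N, ∀ j ≥ N,
      l2dist (U k 0) (U j 0) + l2dist (V k 0) (V j 0) < ε) :
    ∀ T ≥ 0, ∀ ε > 0, ∃ N : ℕ, ∀ k ≥ N, ∀ j ≥ N, ∀ t ∈ Icc (0 : ℝ) T,
      l2dist (U k t) (U j t) + l2dist (V k t) (V j t) < ε := fun T _ ε hε ↦ by
  set K := √(2 * (c1 * Real.exp (c2 * T + c3)))
  obtain ⟨N, hN⟩ := hcauchy (ε / (K + 1)) (by positivity)
  refine ⟨N, fun k hk j hj t ht ↦ ?_⟩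
  calc _ ≤ K * (l2dist (U k 0) (U j 0) + l2dist (V k 0) (V j 0)) :=
        hst.l2dist_add_le hc1 hc2 (hsol k) (hsol j) (hcs k) (hcs j) (hcharge k) (hcharge j) ht
    _ ≤ K * (ε / (K + 1)) := by gcongr; exact (hN k hk j hj).le
    _ < ε := by
      rw [mul_div_assoc', div_lt_iff₀ (by positivity)]
      linarith

end SatisfiesL2Stability

theorem solution_sequence_cauchy_general (m : ℝ) (N1 N2 : ℂ → ℂ → ℂ)
    (hA1 : SatisfiesA1 N1 N2) (hA2 : SatisfiesA2 N1 N2)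
    (δ : ℝ) (hδ : 0 < δ)
    -- `δ` is the smallness constant of the L² stability estimate:
    (hstab : ∃ c1 > 0, ∃ c2 > 0, ∃ c3 > 0, ∀ u v u' v' : ℝ → ℝ → ℂ,
      IsGlobalDiracSolution m N1 N2 u v → IsGlobalDiracSolution m N1 N2 u' v' →
      (∀ t ∈ Set.Ici (0 : ℝ), HasCompactSupport (u t) ∧ HasCompactSupport (v t) ∧
        HasCompactSupport (u' t) ∧ HasCompactSupport (v' t)) →
      (∫ x : ℝ, Complex.normSq (u 0 x)) + (∫ x : ℝ, Complex.normSq (v 0 x)) < δ →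
      (∫ x : ℝ, Complex.normSq (u' 0 x)) + (∫ x : ℝ, Complex.normSq (v' 0 x)) < δ →
      ∀ t ∈ Set.Ici (0 : ℝ),
        (∫ x : ℝ, Complex.normSq (u t x - u' t x)) +
            (∫ x : ℝ, Complex.normSq (v t x - v' t x)) ≤
          ((∫ x : ℝ, Complex.normSq (u 0 x - u' 0 x)) +
              (∫ x : ℝ, Complex.normSq (v 0 x - v' 0 x))) *
            (c1 * Real.exp (c2 * t + c3)))
    (u0 v0 : ℕ → ℝ → ℂ) (uk vk : ℕ → ℝ → ℝ → ℂ)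
    (hcharge : ∀ k,
      (∫ x : ℝ, Complex.normSq (u0 k x)) + (∫ x : ℝ, Complex.normSq (v0 k x)) < δ)
    (hcauchy0 : ∀ ε > 0, ∃ N : ℕ, ∀ k ≥ N, ∀ j ≥ N,
      l2dist (u0 k) (u0 j) + l2dist (v0 k) (v0 j) < ε)
    (hsol : ∀ k, IsGlobalDiracSolution m N1 N2 (uk k) (vk k))
    (hinit : ∀ k, ∀ x : ℝ, uk k 0 x = u0 k x ∧ vk k 0 x = v0 k x)
    (hcsupp : ∀ k, ∀ t ∈ Set.Ici (0 : ℝ),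
      HasCompactSupport (uk k t) ∧ HasCompactSupport (vk k t)) :
    (∀ T ≥ 0, ∀ ε > 0, ∃ N : ℕ, ∀ k ≥ N, ∀ j ≥ N, ∀ t ∈ Set.Icc (0 : ℝ) T,
      l2dist (uk k t) (uk j t) + l2dist (vk k t) (vk j t) < ε) ∧
    ∃ uinf vinf : ℝ → ℝ → ℂ,
      (∀ t ∈ Set.Ici (0 : ℝ), ∀ ε > 0, ∃ η > 0, ∀ s ∈ Set.Ici (0 : ℝ), |s - t| < η →
        l2dist (uinf s) (uinf t) + l2dist (vinf s) (vinf t) < ε) ∧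
      (∀ T ≥ 0, ∀ ε > 0, ∃ N : ℕ, ∀ k ≥ N, ∀ t ∈ Set.Icc (0 : ℝ) T,
        l2dist (uk k t) (uinf t) + l2dist (vk k t) (vinf t) < ε) := by
  obtain ⟨c1, hc1, c2, hc2, c3, -, hst⟩ := hstab
  have hst : SatisfiesL2Stability m N1 N2 δ c1 c2 c3 := hst
  have hu0 : ∀ k, u0 k = uk k 0 := fun k ↦ funext fun x ↦ (hinit k x).1.symm
  have hv0 : ∀ k, v0 k = vk k 0 := fun k ↦ funext fun x ↦ (hinit k x).2.symm
  simp only [hu0, hv0] at hcharge hcauchy0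
  have hcauchy := hst.cauchy_of_initial_cauchy hc1.le hc2.le hsol hcsupp hcharge hcauchy0
  exact ⟨hcauchy, exists_l2_limit (fun k t ht ↦ (hsol k).memLp (hcsupp k) ht)
    (fun k t ht ↦ (hsol k).tendsto_l2dist hA2 (hcsupp k)
      (hst.exists_L0fun_le hc1.le hc2.le hA1 hδ (hsol k) (hcsupp k) (hcharge k)) ht) hcauchy⟩

/-- Cauchy property of the solution sequence (Theorem 1.2, convergence part): let
`δ > 0` be the smallness constant of the L² stability estimate. If `(u0ₖ, v0ₖ)` are
smooth compactly supported initial data with charge `< δ` forming a Cauchy sequence in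
`L²(ℝ; ℂ²)` and `(uₖ, vₖ)` are the corresponding global classical solutions, then for
every `T ≥ 0` the sequence `(uₖ, vₖ)` is Cauchy in `C([0,T]; L²)`; hence there is a
limit `(u∞, v∞) ∈ C([0,∞); L²)` with `‖uₖ - u∞‖_{C([0,T];L²)} + ‖vₖ - v∞‖_{C([0,T];L²)} → 0`
for every `T ≥ 0`. -/
theorem solution_sequence_cauchy (m : ℝ) (hm : 0 ≤ m) (N1 N2 : ℂ → ℂ → ℂ)
    (hA1 : SatisfiesA1 N1 N2) (hA2 : SatisfiesA2 N1 N2)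
    (δ : ℝ) (hδ : 0 < δ)
    -- `δ` is the smallness constant of the L² stability estimate:
    (hstab : ∃ c1 > 0, ∃ c2 > 0, ∃ c3 > 0, ∀ u v u' v' : ℝ → ℝ → ℂ,
      IsGlobalDiracSolution m N1 N2 u v → IsGlobalDiracSolution m N1 N2 u' v' →
      (∀ t ∈ Set.Ici (0 : ℝ), HasCompactSupport (u t) ∧ HasCompactSupport (v t) ∧
        HasCompactSupport (u' t) ∧ HasCompactSupport (v' t)) →
      (∫ x : ℝ, Complex.normSq (u 0 x)) + (∫ x : ℝ, Complex.normSq (v 0 x)) < δ →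
      (∫ x : ℝ, Complex.normSq (u' 0 x)) + (∫ x : ℝ, Complex.normSq (v' 0 x)) < δ →
      ∀ t ∈ Set.Ici (0 : ℝ),
        (∫ x : ℝ, Complex.normSq (u t x - u' t x)) +
            (∫ x : ℝ, Complex.normSq (v t x - v' t x)) ≤
          ((∫ x : ℝ, Complex.normSq (u 0 x - u' 0 x)) +
              (∫ x : ℝ, Complex.normSq (v 0 x - v' 0 x))) *
            (c1 * Real.exp (c2 * t + c3)))
    (u0 v0 : ℕ → ℝ → ℂ) (uk vk : ℕ → ℝ → ℝ → ℂ)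
    (hsm : ∀ k, ContDiff ℝ (⊤ : ℕ∞) (u0 k) ∧ ContDiff ℝ (⊤ : ℕ∞) (v0 k))
    (hcsupp0 : ∀ k, HasCompactSupport (u0 k) ∧ HasCompactSupport (v0 k))
    (hcharge : ∀ k,
      (∫ x : ℝ, Complex.normSq (u0 k x)) + (∫ x : ℝ, Complex.normSq (v0 k x)) < δ)
    (hcauchy0 : ∀ ε > 0, ∃ N : ℕ, ∀ k ≥ N, ∀ j ≥ N,
      l2dist (u0 k) (u0 j) + l2dist (v0 k) (v0 j) < ε)
    (hsol : ∀ k, IsGlobalDiracSolution m N1 N2 (uk k) (vk k))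
    (hinit : ∀ k, ∀ x : ℝ, uk k 0 x = u0 k x ∧ vk k 0 x = v0 k x)
    (hcsupp : ∀ k, ∀ t ∈ Set.Ici (0 : ℝ),
      HasCompactSupport (uk k t) ∧ HasCompactSupport (vk k t)) :
    (∀ T ≥ 0, ∀ ε > 0, ∃ N : ℕ, ∀ k ≥ N, ∀ j ≥ N, ∀ t ∈ Set.Icc (0 : ℝ) T,
      l2dist (uk k t) (uk j t) + l2dist (vk k t) (vk j t) < ε) ∧
    ∃ uinf vinf : ℝ → ℝ → ℂ,
      (∀ t ∈ Set.Ici (0 : ℝ), ∀ ε > 0, ∃ η > 0, ∀ s ∈ Set.Ici (0 : ℝ), |s - t| < η →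
        l2dist (uinf s) (uinf t) + l2dist (vinf s) (vinf t) < ε) ∧
      (∀ T ≥ 0, ∀ ε > 0, ∃ N : ℕ, ∀ k ≥ N, ∀ t ∈ Set.Icc (0 : ℝ) T,
        l2dist (uk k t) (uinf t) + l2dist (vk k t) (vinf t) < ε) :=
  solution_sequence_cauchy_general m N1 N2 hA1 hA2 δ hδ hstab u0 v0 uk vk hcharge hcauchy0 hsol
    hinit hcsupp
end
end
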